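/- Let M ∈ ℂ with M ≠ 0 and y ∈ ℂ, set P = [[M, 1], [0, M⁻¹]], Q = [[M, 0], [2−y, M⁻¹]], and x = M + M⁻¹. Let W = (QP⁻¹)^m (Q⁻¹P)^m for an integer m. Then W₁₁ + (M⁻¹ − M)·W₁₂ = 1 − (y+2−x²)·S_{m−1}(y)·(S_m(y) − (y−1)S_{m−1}(y)), where W₁₁ and W₁₂ are the (1,1)- and (1,2)-entries of W. -/

import Mathlib

open Polynomial

/-- Integer-indexed Chebyshev-like polynomials: `S 0 = 1`, `S 1 = X`,
and `S (l+1) = X * S l - S (l-1)` for all `l : ℤ`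
(equivalently `S l = U_l (v/2)` for the Chebyshev polynomials `U` of the second kind). -/
@[semireducible] noncomputable def chebS (R : Type*) [CommRing R] : ℤ → R[X]
  | 0 => 1
  | 1 => X
  | (n : ℕ) + 2 => X * chebS R (n + 1) - chebS R n
  | -((n : ℕ) + 1) => X * chebS R (-n) - chebS R (-n + 1)
  termination_by n => Int.natAbs n + Int.natAbs (n - 1)

/-! Both `A = QP⁻¹` and `B = Q⁻¹P` have determinant `1` and trace `y`, so Cayley–Hamilton
gives `A² = yA - 1` and hence `A^m = S_{m-1}(y) A - S_{m-2}(y) I` for every `m : ℤ`, and likewise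
for `B`. Multiplying the two expressions out, the claimed identity reduces to the Cassini-type
identity `S_{m-1}(y)² - y S_{m-1}(y) S_{m-2}(y) + S_{m-2}(y)² = 1`. -/

open Polynomial.Chebyshev

theorem chebS_eq_S (R : Type*) [CommRing R] : chebS R = S R := by
  funext n
  induction n using Polynomial.Chebyshev.induct with
  | zero => rw [chebS.eq_1, S_zero]
  | one => rw [chebS.eq_2, S_one]
  | add_two n ih₁ ih₀ =>
    rw [show chebS R (n + 2) = X * chebS R (n + 1) - chebS R n from chebS.eq_3 R n, S_add_two,
      ih₁, ih₀]
  | neg_add_one n ih₀ ih₁ =>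
    rw [← neg_add',
      show chebS R (-(n + 1)) = X * chebS R (-n) - chebS R (-n + 1) from chebS.eq_4 R n,
      ih₀, ih₁, neg_add', S_sub_one]

namespace Matrix

variable {R : Type*} [CommRing R]

theorem inv_eq_adjugate_of_det_eq_one {n : Type*} [Fintype n] [DecidableEq n]
    {A : Matrix n n R} (h : A.det = 1) : A⁻¹ = A.adjugate := by
  rw [inv_def, h, Ring.inverse_one, one_smul]

theorem fin_two_sq_eq_trace_smul_sub_det_smul (A : Matrix (Fin 2) (Fin 2) R) :
    A ^ 2 = A.trace • A - A.det • 1 := by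
  rw [eta_fin_two A, sq, mul_fin_two, trace_fin_two_of, det_fin_two_of, one_fin_two]
  ext i j
  fin_cases i <;> fin_cases j <;> simp <;> ring

theorem fin_two_zpow_eq_S_eval_trace {A : Matrix (Fin 2) (Fin 2) R} (h : A.det = 1) (m : ℤ) :
    A ^ m = (S R (m - 1)).eval A.trace • A - (S R (m - 2)).eval A.trace • 1 := by
  have hA : IsUnit A.det := h ▸ isUnit_one
  have hsq : A * A = A.trace • A - 1 := by
    rw [← sq, fin_two_sq_eq_trace_smul_sub_det_smul, h, one_smul]
  induction m using Int.induction_on with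
  | zero => simp
  | succ k ih =>
    rw [zpow_add_one hA, ih, add_sub_cancel_right, show (k : ℤ) + 1 - 2 = k - 1 by ring,
      S_eq R k]
    simp only [eval_sub, eval_mul, eval_X, sub_mul, smul_mul_assoc, hsq, one_mul]
    module
  | pred k ih =>
    have hinv : A⁻¹ = A.trace • 1 - A := by
      refine inv_eq_right_inv ?_
      rw [mul_sub, mul_smul_comm, mul_one, hsq, sub_sub_cancel]
    rw [zpow_sub_one hA, ih, hinv, show -(k : ℤ) - 1 - 1 = -k - 2 by ring,
      show -(k : ℤ) - 1 - 2 = -k - 2 - 1 by ring, S_sub_one R (-k - 2),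
      show -(k : ℤ) - 2 + 1 = -k - 1 by ring]
    simp only [eval_sub, eval_mul, eval_X, mul_sub, sub_mul, smul_mul_assoc, mul_smul_comm, hsq,
      one_mul, mul_one]
    module

end Matrix

open Matrix

section RileyMatrices

variable {K : Type*} [Field K] {M : K} (y : K)

theorem riley_Q_mul_P_inv (hM : M ≠ 0) :
    !![M, 0; 2 - y, M⁻¹] * (!![M, 1; 0, M⁻¹])⁻¹ = !![1, -M; (2 - y) * M⁻¹, y - 1] := by
  rw [inv_eq_adjugate_of_det_eq_one (by simp [det_fin_two_of, hM]), adjugate_fin_two_of,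
    mul_fin_two]
  ext i j
  fin_cases i <;> fin_cases j <;> simp [hM]
  ring

theorem riley_Q_inv_mul_P (hM : M ≠ 0) :
    (!![M, 0; 2 - y, M⁻¹])⁻¹ * !![M, 1; 0, M⁻¹] = !![1, M⁻¹; (y - 2) * M, y - 1] := by
  rw [inv_eq_adjugate_of_det_eq_one (by simp [det_fin_two_of, hM]), adjugate_fin_two_of,
    mul_fin_two]
  ext i j
  fin_cases i <;> fin_cases j <;> simp [hM]
  ring

theorem det_riley_Q_mul_P_inv (hM : M ≠ 0) : det !![1, -M; (2 - y) * M⁻¹, y - 1] = 1 := by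
  rw [det_fin_two_of]
  field_simp
  ring

theorem det_riley_Q_inv_mul_P (hM : M ≠ 0) : det !![1, M⁻¹; (y - 2) * M, y - 1] = 1 := by
  rw [det_fin_two_of]
  field_simp
  ring

end RileyMatrices

/-- For `W = (QP⁻¹)^m (Q⁻¹P)^m` with `P = [[M,1],[0,M⁻¹]]`, `Q = [[M,0],[2-y,M⁻¹]]` and
`x = M + M⁻¹`, one has `W₁₁ + (M⁻¹ - M)·W₁₂ = 1 - (y+2-x²)·S_{m-1}(y)·(S_m(y) - (y-1)S_{m-1}(y))`. -/
theorem even_word_Riley_factor (M y : ℂ) (hM : M ≠ 0) (m : ℤ)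
    (W : Matrix (Fin 2) (Fin 2) ℂ)
    (hW : W = (!![M, 0; 2 - y, M⁻¹] * (!![M, 1; 0, M⁻¹])⁻¹) ^ m
        * ((!![M, 0; 2 - y, M⁻¹])⁻¹ * !![M, 1; 0, M⁻¹]) ^ m) :
    W 0 0 + (M⁻¹ - M) * W 0 1
      = 1 - (y + 2 - (M + M⁻¹)^2) * (chebS ℂ (m - 1)).eval y
            * ((chebS ℂ m).eval y - (y - 1) * (chebS ℂ (m - 1)).eval y) := by
  rw [riley_Q_mul_P_inv y hM, riley_Q_inv_mul_P y hM,
    fin_two_zpow_eq_S_eval_trace (det_riley_Q_mul_P_inv y hM),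
    fin_two_zpow_eq_S_eval_trace (det_riley_Q_inv_mul_P y hM),
    trace_fin_two_of, trace_fin_two_of, add_sub_cancel] at hW
  have hcassini := congrArg (eval y) (S_sq_add_S_sq ℂ (m - 2))
  rw [show m - 2 + 1 = m - 1 by ring] at hcassini
  simp only [eval_sub, eval_add, eval_mul, eval_pow, eval_X, eval_one] at hcassini
  rw [chebS_eq_S, S_eq ℂ m, hW]
  simp [one_fin_two]
  field_simp
  linear_combination M ^ 2 * hcassini
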